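/- Let Φ : [0,∞)^n → [0,∞) be induced by a norm Ψ on ℝ^n (i.e. Ψ(x) = Φ(|x₁|,...,|xₙ|) is a norm). If (Xᵢ,dᵢ), i = 1,...,n, are length (inner metric) spaces, then (X₁ × ... × Xₙ, d_Φ) is a length space. -/

import Mathlib

/-!
Reparametrize each factor curve proportionally to arc length: it becomes `Lᵢ`-Lipschitz on
`[0, 1]`, with `Lᵢ` at most `dᵢ(xᵢ, yᵢ) + ε'`. All coordinates of the product curve then move at
speeds proportional to the one vector `L`, so monotonicity and homogeneity of `Φ` make the product
curve `Φ(L)`-Lipschitz for `d_Φ`; its partition sums are therefore at most `Φ(L)`, and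
subadditivity gives `Φ(L) ≤ Φ(d(x, y)) + ε' Φ(1)`.
-/

/-- The set of partition sums of a curve `c : [0,1] → X` with respect to a
distance function `d`; its supremum is the length of the curve. -/
def partitionSums {X : Type*} (d : X → X → ℝ) (c : ℝ → X) : Set ℝ :=
  { s | ∃ (k : ℕ) (t : Fin (k + 1) → ℝ), Monotone t ∧ t 0 = 0 ∧ t (Fin.last k) = 1 ∧
      s = ∑ j : Fin k, d (c (t (Fin.castSucc j))) (c (t j.succ)) }

/-- `(X, d)` is a length (inner metric) space: any two points can be joined by
continuous curves of length arbitrarily close to their distance. -/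
def IsLengthSpaceWith {X : Type*} (d : X → X → ℝ) : Prop :=
  ∀ x y : X, ∀ ε > (0 : ℝ), ∃ c : ℝ → X, c 0 = x ∧ c 1 = y ∧
    (∀ t : ℝ, ∀ ε' > (0 : ℝ), ∃ δ > (0 : ℝ), ∀ s : ℝ, |s - t| < δ → d (c s) (c t) < ε') ∧
    (∀ S ∈ partitionSums d c, S ≤ d x y + ε)

open Set Filter Topology
open scoped NNReal

namespace variationOnFromTo

variable {α : Type*} [LinearOrder α] {E : Type*} [PseudoMetricSpace E] {f : α → E} {s : Set α}

theorem dist_le_abs (hf : LocallyBoundedVariationOn f s) {a b : α} (ha : a ∈ s) (hb : b ∈ s) :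
    dist (f a) (f b) ≤ |variationOnFromTo f s a b| := by
  wlog hab : a ≤ b generalizing a b
  · rw [dist_comm, variationOnFromTo.eq_neg_swap, abs_neg]
    exact this hb ha (le_of_not_ge hab)
  rw [variationOnFromTo.eq_of_le f s hab, ENNReal.abs_toReal]
  exact (hf a b ha hb).dist_le ⟨ha, le_rfl, hab⟩ ⟨hb, hab, le_rfl⟩

theorem _root_.BoundedVariationOn.continuousWithinAt_variationOnFromTo [TopologicalSpace α]
    [OrderTopology α] (hf : BoundedVariationOn f s) {a x : α} (ha : a ∈ s) (hx : x ∈ s)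
    (hfx : ContinuousWithinAt f s x) :
    ContinuousWithinAt (variationOnFromTo f s a) s x := by
  have hadd : ∀ y ∈ s, variationOnFromTo f s a y =
      variationOnFromTo f s a x + variationOnFromTo f s x y := fun y hy =>
    (variationOnFromTo.add hf.locallyBoundedVariationOn ha hx hy).symm
  suffices h : Tendsto (variationOnFromTo f s x) (𝓝[s] x) (𝓝 0) by
    refine ContinuousWithinAt.congr_of_mem ?_ hadd hx
    simpa [ContinuousWithinAt, variationOnFromTo.self] using
      (tendsto_const_nhds (x := variationOnFromTo f s a x)).add h
  have hleft := hf.tendsto_eVariationOn_Icc_zero_left (hfx.mono inter_subset_left)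
  have hright := hf.tendsto_eVariationOn_Icc_zero_right x (hfx.mono inter_subset_left)
  refine squeeze_zero_norm (fun y => ?_) (by
    simpa using ((ENNReal.tendsto_toReal ENNReal.zero_ne_top).comp hleft).add
      ((ENNReal.tendsto_toReal ENNReal.zero_ne_top).comp hright))
  rcases le_total x y with hxy | hyx
  · rw [variationOnFromTo.eq_of_le f s hxy, Real.norm_eq_abs, ENNReal.abs_toReal]
    exact le_add_of_nonneg_left ENNReal.toReal_nonneg
  · rw [variationOnFromTo.eq_of_ge f s hyx, Real.norm_eq_abs, abs_neg, ENNReal.abs_toReal]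
    exact le_add_of_nonneg_right ENNReal.toReal_nonneg

end variationOnFromTo

theorem BoundedVariationOn.exists_lipschitzWith_eVariationOn {X : Type*} [MetricSpace X] {c : ℝ → X}
    (hc : ContinuousOn c (Icc 0 1)) (hV : BoundedVariationOn c (Icc 0 1)) :
    ∃ γ : ℝ → X, γ 0 = c 0 ∧ γ 1 = c 1 ∧
      LipschitzWith (eVariationOn c (Icc 0 1)).toNNReal γ := by
  set I : Set ℝ := Icc 0 1
  set ℓ := variationOnFromTo c I 0
  set L : ℝ := (eVariationOn c I).toReal
  have h0 : (0 : ℝ) ∈ I := left_mem_Icc.2 zero_le_one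
  have h1 : (1 : ℝ) ∈ I := right_mem_Icc.2 zero_le_one
  have hVloc := hV.locallyBoundedVariationOn
  have hℓ0 : ℓ 0 = 0 := variationOnFromTo.self c I 0
  have hℓ1 : ℓ 1 = L := by
    simp only [ℓ, L, variationOnFromTo.eq_of_le c I zero_le_one, I, inter_self]
  have hdist : ∀ u ∈ I, ∀ v ∈ I, dist (c u) (c v) ≤ |ℓ v - ℓ u| := fun u hu v hv => by
    rw [variationOnFromTo.sub_right hVloc h0 hv hu]
    exact variationOnFromTo.dist_le_abs hVloc hu hv
  have hℓcont : ContinuousOn ℓ I := fun x hx =>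
    hV.continuousWithinAt_variationOnFromTo h0 hx (hc x hx)
  have hφ : ∀ t : I, ∃ u ∈ I, ℓ u = t * L := fun t => by
    refine intermediate_value_Icc zero_le_one hℓcont ?_
    rw [hℓ0, hℓ1]
    exact ⟨mul_nonneg t.2.1 ENNReal.toReal_nonneg, mul_le_of_le_one_left ENNReal.toReal_nonneg t.2.2⟩
  choose φ hφI hℓφ using hφ
  have hlip : LipschitzWith (eVariationOn c I).toNNReal (c ∘ φ) := by
    refine LipschitzWith.of_dist_le_mul fun a b => ?_
    calc dist (c (φ a)) (c (φ b)) ≤ |ℓ (φ b) - ℓ (φ a)| := hdist _ (hφI a) _ (hφI b)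
      _ = L * dist a b := by
        rw [hℓφ, hℓφ, ← sub_mul, abs_mul, abs_of_nonneg (ENNReal.toReal_nonneg), mul_comm,
          Subtype.dist_eq, Real.dist_eq, abs_sub_comm]
  have hend : ∀ t : I, ∀ u ∈ I, ℓ u = t * L → c (φ t) = c u := fun t u hu h =>
    dist_le_zero.1 <| by simpa [hℓφ, h] using hdist _ (hφI t) u hu
  refine ⟨(c ∘ φ) ∘ projIcc 0 1 zero_le_one, ?_, ?_, ?_⟩
  · simpa using hend _ 0 h0 (by simp [hℓ0])
  · simpa using hend _ 1 h1 (by simp [hℓ1])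
  · simpa only [mul_one] using hlip.comp (LipschitzWith.projIcc zero_le_one)

theorem sum_range_mem_partitionSums {X : Type*} (d : X → X → ℝ) (c : ℝ → X) {k : ℕ}
    {t : ℕ → ℝ} (ht : Monotone t) (ht0 : t 0 = 0) (htk : t k = 1) :
    ∑ j ∈ Finset.range k, d (c (t j)) (c (t (j + 1))) ∈ partitionSums d c :=
  ⟨k, fun j => t j, fun _ _ h => ht h, ht0, htk,
    (Fin.sum_univ_eq_sum_range (fun j => d (c (t j)) (c (t (j + 1)))) k).symm⟩

theorem eVariationOn_Icc_le_of_partitionSums_le {X : Type*} [PseudoMetricSpace X] {c : ℝ → X}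
    {B : ℝ} (hB : ∀ S ∈ partitionSums (fun a b => dist a b) c, S ≤ B) :
    eVariationOn c (Icc 0 1) ≤ ENNReal.ofReal B := by
  refine iSup_le fun ⟨m, u, hu, huI⟩ => ?_
  -- the points `u 0 ≤ ⋯ ≤ u m`, preceded by `0` and followed by `1`
  set t : ℕ → ℝ := fun j => if j = 0 then 0 else if j ≤ m + 1 then u (j - 1) else 1
  have ht : Monotone t := by
    intro a b hab
    simp only [t]
    split_ifs <;> grind [hu (show a - 1 ≤ b - 1 by omega), huI (a - 1), huI (b - 1)]
  have htu : ∀ i ≤ m, t (i + 1) = u i := fun i hi => by simp [t, hi]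
  have hsum : ∑ i ∈ Finset.range m, dist (c (u i)) (c (u (i + 1))) ≤
      ∑ j ∈ Finset.range (m + 2), dist (c (t j)) (c (t (j + 1))) := by
    rw [Finset.sum_range_succ, Finset.sum_range_succ']
    have hmid : ∀ i ∈ Finset.range m, dist (c (u i)) (c (u (i + 1))) =
        dist (c (t (i + 1))) (c (t (i + 1 + 1))) := fun i hi => by
      rw [htu i (by simp at hi; omega), htu (i + 1) (by simp at hi; omega)]
    rw [Finset.sum_congr rfl hmid]
    linarith [dist_nonneg (x := c (t 0)) (y := c (t (0 + 1))),
      dist_nonneg (x := c (t (m + 1))) (y := c (t (m + 1 + 1)))]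
  calc ∑ i ∈ Finset.range m, edist (c (u (i + 1))) (c (u i))
      = ENNReal.ofReal (∑ i ∈ Finset.range m, dist (c (u i)) (c (u (i + 1)))) := by
        rw [ENNReal.ofReal_sum_of_nonneg fun _ _ => dist_nonneg]
        simp [edist_dist, dist_comm]
    _ ≤ ENNReal.ofReal B :=
        ENNReal.ofReal_le_ofReal (hsum.trans (hB _ (sum_range_mem_partitionSums _ c ht
          (by simp [t]) (by simp [t]))))

theorem IsLengthSpaceWith.exists_lipschitzWith {X : Type*} [MetricSpace X]
    (hX : IsLengthSpaceWith (fun a b : X => dist a b)) (x y : X) {ε : ℝ} (hε : 0 < ε) :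
    ∃ γ : ℝ → X, γ 0 = x ∧ γ 1 = y ∧ ∃ L : ℝ≥0, (L : ℝ) ≤ dist x y + ε ∧ LipschitzWith L γ := by
  obtain ⟨c, hc0, hc1, hc, hlen⟩ := hX x y ε hε
  have hcont : Continuous c := Metric.continuous_iff.2 fun t ε' hε' => by
    simpa only [Real.dist_eq] using hc t ε' hε'
  have hV := eVariationOn_Icc_le_of_partitionSums_le hlen
  obtain ⟨γ, hγ0, hγ1, hγ⟩ := BoundedVariationOn.exists_lipschitzWith_eVariationOn
    hcont.continuousOn (ne_top_of_le_ne_top ENNReal.ofReal_ne_top hV)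
  refine ⟨γ, hγ0.trans hc0, hγ1.trans hc1, _, ?_, hγ⟩
  rw [ENNReal.coe_toNNReal_eq_toReal]
  exact ENNReal.toReal_le_of_le_ofReal (by positivity) hV

theorem Fin.sum_succ_sub_castSucc {M : Type*} [AddCommGroup M] {k : ℕ} (t : Fin (k + 1) → M) :
    ∑ j : Fin k, (t j.succ - t j.castSucc) = t (Fin.last k) - t 0 := by
  induction k with
  | zero => simp
  | succ k ih =>
    rw [Fin.sum_univ_castSucc]
    simp only [Fin.succ_castSucc]
    rw [ih fun j => t j.castSucc, Fin.succ_last, Fin.castSucc_zero, sub_add_sub_cancel']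

theorem IsLengthSpaceWith.of_forall_exists_le_mul {X : Type*} {d : X → X → ℝ}
    (h : ∀ x y : X, ∀ ε > (0 : ℝ), ∃ c : ℝ → X, c 0 = x ∧ c 1 = y ∧
      ∃ K ≤ d x y + ε, ∀ a b, d (c a) (c b) ≤ K * |b - a|) :
    IsLengthSpaceWith d := by
  intro x y ε hε
  obtain ⟨c, hc0, hc1, K, hK, hcK⟩ := h x y ε hε
  refine ⟨c, hc0, hc1, fun t ε' hε' => ⟨ε' / (|K| + 1), by positivity, fun s hs => ?_⟩, ?_⟩
  · calc d (c s) (c t) ≤ K * |t - s| := hcK s t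
      _ ≤ (|K| + 1) * |s - t| := by
          rw [abs_sub_comm]
          gcongr
          linarith [le_abs_self K]
      _ < (|K| + 1) * (ε' / (|K| + 1)) := mul_lt_mul_of_pos_left hs (by positivity)
      _ = ε' := mul_div_cancel₀ _ (by positivity)
  · rintro S ⟨k, t, ht, ht0, htk, rfl⟩
    calc ∑ j : Fin k, d (c (t j.castSucc)) (c (t j.succ))
        ≤ ∑ j : Fin k, K * (t j.succ - t j.castSucc) := Finset.sum_le_sum fun j _ => by
          simpa [abs_of_nonneg (sub_nonneg.2 (ht (Fin.castSucc_le_succ j)))] using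
            hcK (t j.castSucc) (t j.succ)
      _ = K := by rw [← Finset.mul_sum, Fin.sum_succ_sub_castSucc, htk, ht0, sub_zero, mul_one]
      _ ≤ d x y + ε := hK

theorem stmt_10_general {n : ℕ} (Φ : (Fin n → ℝ) → ℝ)
    (hpos : ∀ q : Fin n → ℝ, 0 ≤ q → 0 ≤ Φ q)
    (hmono : ∀ p q : Fin n → ℝ, 0 ≤ q → q ≤ p → Φ q ≤ Φ p)
    (hsub : ∀ p q : Fin n → ℝ, 0 ≤ p → 0 ≤ q → Φ (p + q) ≤ Φ p + Φ q)
    (hhom : ∀ (l : ℝ) (q : Fin n → ℝ), 0 ≤ l → 0 ≤ q → Φ (l • q) = l * Φ q)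
    (X : Fin n → Type*) [∀ i, MetricSpace (X i)]
    (hX : ∀ i, IsLengthSpaceWith (fun a b : X i => dist a b)) :
    IsLengthSpaceWith (fun x y : ∀ i, X i => Φ (fun i => dist (x i) (y i))) := by
  refine IsLengthSpaceWith.of_forall_exists_le_mul fun x y ε hε => ?_
  have hΦ1 : 0 ≤ Φ 1 := hpos 1 zero_le_one
  set ε' := ε / (Φ 1 + 1)
  have hε' : 0 < ε' := by positivity
  choose γ hγ0 hγ1 L hL hγL using fun i => (hX i).exists_lipschitzWith (x i) (y i) hε'
  refine ⟨fun s i => γ i s, funext hγ0, funext hγ1, Φ fun i => L i, ?_, fun a b => ?_⟩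
  · calc Φ (fun i => L i) ≤ Φ ((fun i => dist (x i) (y i)) + ε' • 1) :=
          hmono _ _ (fun i => (L i).2) (fun i => by simpa using hL i)
      _ ≤ Φ (fun i => dist (x i) (y i)) + ε' * Φ 1 := by
          rw [← hhom ε' 1 hε'.le zero_le_one]
          exact hsub _ _ (fun i => dist_nonneg) (smul_nonneg hε'.le zero_le_one)
      _ ≤ Φ (fun i => dist (x i) (y i)) + ε := by
          gcongr
          rw [div_mul_eq_mul_div, div_le_iff₀ (by positivity)]
          nlinarith
  · calc Φ (fun i => dist (γ i a) (γ i b)) ≤ Φ (|b - a| • fun i => (L i : ℝ)) :=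
          hmono _ _ (fun i => dist_nonneg) (fun i => by
            simpa [Real.dist_eq, abs_sub_comm, mul_comm] using (hγL i).dist_le_mul a b)
      _ = Φ (fun i => L i) * |b - a| :=
          (hhom _ _ (abs_nonneg _) fun i => (L i).2).trans (mul_comm _ _)

/-- If `Φ` is induced by a norm (i.e. satisfies (1)-(4)) and the
`(Xᵢ, dᵢ)` are length spaces, then `(∏ Xᵢ, d_Φ)` is a length space. -/
theorem stmt_10 {n : ℕ} (Φ : (Fin n → ℝ) → ℝ)
    (hpos : ∀ q : Fin n → ℝ, 0 ≤ q → 0 ≤ Φ q)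
    (hdef : ∀ q : Fin n → ℝ, 0 ≤ q → (Φ q = 0 ↔ q = 0))
    (hmono : ∀ p q : Fin n → ℝ, 0 ≤ q → q ≤ p → Φ q ≤ Φ p)
    (hsub : ∀ p q : Fin n → ℝ, 0 ≤ p → 0 ≤ q → Φ (p + q) ≤ Φ p + Φ q)
    (hhom : ∀ (l : ℝ) (q : Fin n → ℝ), 0 ≤ l → 0 ≤ q → Φ (l • q) = l * Φ q)
    (X : Fin n → Type*) [∀ i, MetricSpace (X i)]
    (hX : ∀ i, IsLengthSpaceWith (fun a b : X i => dist a b)) :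
    IsLengthSpaceWith (fun x y : ∀ i, X i => Φ (fun i => dist (x i) (y i))) :=
  stmt_10_general Φ hpos hmono hsub hhom X hX
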